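/- arXiv:2101.07510 — 4 statements merged into one kernel-verified Lean document; each statement's English description precedes it below -/
import Mathlib

section
/- Let Δ' ⊆ Δ and let δ ∈ V∨ be dominant. Suppose ν ∈ V∨ is such that δ − ν = Σ_{γ ∈ Δ'} d_γ · γ∨ with d_γ > 0 for every γ ∈ Δ'. Let α ∈ Δ ∖ Δ' be a simple root that is a neighbour of Δ' in the Dynkin diagram, i.e. ⟨α, γ∨⟩ < 0 for some γ ∈ Δ'. Then ⟨α, ν⟩ > 0. (Key intermediate claim in the proof of Lemma 7.4 of the paper.) -/
/-!
Pairing the identity `δ - ν = Σ d_γ γ∨` with `α` gives `⟨α, δ⟩ - ⟨α, ν⟩ = Σ d_γ ⟨α, γ∨⟩`.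
Distinct simple roots pair non-positively, since otherwise the root `α - ⟨α, γ∨⟩ γ` would have
simple-root coefficients of both signs. So every term of the sum is `≤ 0` and the neighbour's
term is `< 0`, while `⟨α, δ⟩ ≥ 0` by dominance.
-/

open Module

/-- Data of a reduced crystallographic root system `Φ` spanning a finite-dimensional
`ℚ`-vector space `V`, with a fixed base `Δ` of simple roots, set of positive roots
`pos`, coroots `coroot α` in the dual space `V∨`, and Weyl group `W` (generated by the
reflections in the roots). The pairing `⟨x, f⟩` of `x ∈ V` with `f ∈ V∨` is `f x`. -/
structure RootSystemData (V : Type) [AddCommGroup V] [Module ℚ V] [FiniteDimensional ℚ V] where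
  /-- the (finite) set of roots -/
  Φ : Finset V
  /-- the base of simple roots -/
  Δ : Finset V
  /-- the set of positive roots -/
  pos : Finset V
  /-- the coroot `α∨ ∈ V∨` associated with a root `α` -/
  coroot : V → Module.Dual ℚ V
  /-- the Weyl group, as a group of linear automorphisms of `V` -/
  W : Subgroup (V ≃ₗ[ℚ] V)
  span_Φ : Submodule.span ℚ (Φ : Set V) = ⊤
  zero_notin : (0:V) ∉ Φ
  Δ_sub : Δ ⊆ Φ
  Δ_indep : LinearIndependent ℚ (Subtype.val : {x // x ∈ Δ} → V)
  pos_sub : pos ⊆ Φ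
  mem_pos_iff : ∀ β ∈ Φ, (β ∈ pos ↔ ∃ c : V → ℚ, (∀ α, 0 ≤ c α) ∧ β = ∑ α ∈ Δ, c α • α)
  pos_or_neg : ∀ β ∈ Φ, β ∈ pos ∨ -β ∈ pos
  coroot_self : ∀ α, α ∈ Φ → coroot α α = 2
  crystallographic : ∀ α ∈ Φ, ∀ β ∈ Φ, ∃ n : ℤ, coroot α β = (n:ℚ)
  reduced : ∀ α ∈ Φ, ∀ c : ℚ, c • α ∈ Φ → c = 1 ∨ c = -1
  reflect_root : ∀ α ∈ Φ, ∀ β ∈ Φ, β - coroot α β • α ∈ Φ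
  reflect_coroot : ∀ α ∈ Φ, ∀ β ∈ Φ, ∀ x : V,
    coroot (β - coroot α β • α) x = coroot β (x - coroot α x • α)
  weyl_gen : W = Subgroup.closure
    { w : V ≃ₗ[ℚ] V | ∃ α, ∃ hα : α ∈ Φ, w = Module.reflection (coroot_self α hα) }

namespace RootSystemData

variable {V : Type} [AddCommGroup V] [Module ℚ V] [FiniteDimensional ℚ V] (R : RootSystemData V)

/-- The (contragredient) action of a linear automorphism `w` of `V` on the dual space `V∨`:
`⟨x, w(ν)⟩ = ⟨w⁻¹(x), ν⟩`, so that `⟨w(x), w(ν)⟩ = ⟨x, ν⟩`. -/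
noncomputable def dAct (w : V ≃ₗ[ℚ] V) (ν : Module.Dual ℚ V) : Module.Dual ℚ V :=
  ν.comp (w.symm : V →ₗ[ℚ] V)

/-- `ν ∈ V∨` is dominant if `⟨α, ν⟩ ≥ 0` for all simple roots `α ∈ Δ`. -/
def IsDominant (ν : Module.Dual ℚ V) : Prop := ∀ α ∈ R.Δ, 0 ≤ ν α

/-- `ν ≤ ν'` iff `ν' − ν` is a non-negative rational linear combination of the positive
coroots `{β∨ : β ∈ Φ⁺}`. -/
def le (ν ν' : Module.Dual ℚ V) : Prop :=
  ∃ c : V → ℚ, (∀ β, 0 ≤ c β) ∧ ν' - ν = ∑ β ∈ R.pos, c β • R.coroot β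

end RootSystemData

namespace RootSystemData

variable {V : Type} [AddCommGroup V] [Module ℚ V] [FiniteDimensional ℚ V] (R : RootSystemData V)

lemma eq_of_sum_smul_simple_eq {c e : V → ℚ} (h : ∑ x ∈ R.Δ, c x • x = ∑ x ∈ R.Δ, e x • x)
    {x : V} (hx : x ∈ R.Δ) : c x = e x :=
  (linearIndepOn_finset_iffₛ (v := id) (s := R.Δ)).mp R.Δ_indep c e h x hx

lemma nonneg_or_nonpos_of_sum_smul_simple_mem_Φ {c : V → ℚ} (hc : ∑ x ∈ R.Δ, c x • x ∈ R.Φ) :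
    (∀ x ∈ R.Δ, 0 ≤ c x) ∨ (∀ x ∈ R.Δ, c x ≤ 0) := by
  rcases R.pos_or_neg _ hc with hpos | hneg
  · obtain ⟨e, he, hce⟩ := (R.mem_pos_iff _ hc).mp hpos
    exact Or.inl fun x hx => R.eq_of_sum_smul_simple_eq hce hx ▸ he x
  · obtain ⟨e, he, hce⟩ := (R.mem_pos_iff _ (R.pos_sub hneg)).mp hneg
    have hce' : ∑ x ∈ R.Δ, (-c x) • x = ∑ x ∈ R.Δ, e x • x := by
      simpa only [neg_smul, Finset.sum_neg_distrib] using hce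
    exact Or.inr fun x hx => by linarith [R.eq_of_sum_smul_simple_eq hce' hx, he x]

lemma coroot_apply_nonpos_of_ne {α β : V} (hα : α ∈ R.Δ) (hβ : β ∈ R.Δ) (hne : α ≠ β) :
    R.coroot β α ≤ 0 := by
  classical
  set c := R.coroot β α
  let f : V → ℚ := fun x => (if x = α then 1 else 0) - if x = β then c else 0
  have hf : ∑ x ∈ R.Δ, f x • x = α - c • β := by
    simp only [f, sub_smul, ite_smul, one_smul, zero_smul, Finset.sum_sub_distrib,
      Finset.sum_ite_eq', hα, hβ, if_true]
  have hroot : ∑ x ∈ R.Δ, f x • x ∈ R.Φ := hf ▸ R.reflect_root β (R.Δ_sub hβ) α (R.Δ_sub hα)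
  rcases R.nonneg_or_nonpos_of_sum_smul_simple_mem_Φ hroot with h | h
  · simpa [f, hne.symm] using h β hβ
  · exact absurd (h α hα) (by simp [f, hne])

end RootSystemData

/-- Intermediate claim in the proof of Lemma 7.4: let `Δ' ⊆ Δ`, let `δ ∈ V∨` be dominant
and suppose `δ − ν = Σ_{γ ∈ Δ'} d_γ · γ∨` with `d_γ > 0` for all `γ ∈ Δ'`. If `α ∈ Δ ∖ Δ'`
is a neighbour of `Δ'` in the Dynkin diagram (`⟨α, γ∨⟩ < 0` for some `γ ∈ Δ'`), then
`⟨α, ν⟩ > 0`. -/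
theorem pos_pairing_of_dynkin_neighbour {V : Type} [AddCommGroup V] [Module ℚ V]
    [FiniteDimensional ℚ V] (R : RootSystemData V)
    (Δ' : Finset V) (hΔ' : Δ' ⊆ R.Δ)
    (δ : Module.Dual ℚ V) (hδ : R.IsDominant δ)
    (ν : Module.Dual ℚ V) (d : V → ℚ) (hd : ∀ γ ∈ Δ', 0 < d γ)
    (heq : δ - ν = ∑ γ ∈ Δ', d γ • R.coroot γ)
    (α : V) (hα : α ∈ R.Δ) (hα' : α ∉ Δ')
    (hnb : ∃ γ ∈ Δ', R.coroot γ α < 0) :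
    0 < ν α := by
  obtain ⟨γ₀, hγ₀, hγ₀α⟩ := hnb
  have hpair : δ α - ν α = ∑ γ ∈ Δ', d γ * R.coroot γ α := by
    simpa using congrArg (fun f : Module.Dual ℚ V => f α) heq
  have hsum : ∑ γ ∈ Δ', d γ * R.coroot γ α < 0 := by
    refine Finset.sum_neg' (fun γ hγ => ?_) ⟨γ₀, hγ₀, mul_neg_of_pos_of_neg (hd γ₀ hγ₀) hγ₀α⟩
    exact mul_nonpos_of_nonneg_of_nonpos (hd γ hγ).le
      (R.coroot_apply_nonpos_of_ne hα (hΔ' hγ) (ne_of_mem_of_not_mem hγ hα').symm)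
  linarith [hδ α hα]
end

section
/- For every χ ∈ V∨, the set D(χ) = {ν ∈ V∨ : ν is dominant and χ ≤ ν} is nonempty and has a least element ν(χ), i.e. an element of D(χ) which is ≤ every element of D(χ). Moreover ν(χ) ≤ χ_dom, where χ_dom denotes the unique dominant element in the Weyl group orbit of χ. (Combinatorial content of Lemma 6.1 of the paper: the set B(G, ≥ w₀(λ)) has a unique minimal element b(λ), and b(λ) ≤ the class of λ(ξ).) -/
/-!
Write a candidate `ν` as `χ + ∑_{α ∈ Δ} d_α α∨`; this is possible for every `ν ≥ χ` because each
positive coroot is a nonnegative combination of simple coroots (compare coroots through a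
`W`-invariant inner product). Then `ν ∈ D(χ)` becomes the system `d ≥ 0`, `A d ≥ -χ|_Δ` for the
Cartan matrix `A`, whose off-diagonal entries are `≤ 0`, and `D(χ) ≠ ∅` because `2ρ∨` pairs to `2`
with every simple root. A system `d ≥ 0`, `A d ≥ c` with such a matrix has a least solution as soon
as it has one: if `c ≤ 0` it is `0`; otherwise a row with `c_α > 0` forces `A_αα > 0`, the unknown
`d_α` is eliminated by a Schur complement, which again has nonpositive off-diagonal entries, and
induction on the number of unknowns applies.

For `ν(χ) ≤ χ_dom` it suffices that `χ ≤ χ_dom`, i.e. `w λ ≤ λ` for dominant `λ` and every word `w`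
in the simple reflections. Induct on the length of `w = w' s_α`: if `w' α > 0` then
`w λ = w' λ - λ(α) (w' α)∨ ≤ w' λ`; if `w' α < 0`, the exchange condition shortens `w`.
-/

open Module

open Finset

section LeastSolution

open Function

variable {ι 𝕜 : Type*} [Field 𝕜] [DecidableEq ι] {J : Finset ι} {M : ι → ι → 𝕜} {c d : ι → 𝕜}
  {α : ι}

def pivotValue (J : Finset ι) (M : ι → ι → 𝕜) (c : ι → 𝕜) (α : ι) (d : ι → 𝕜) : 𝕜 :=
  (c α - ∑ j ∈ J.erase α, M α j * d j) / M α α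

def schurMatrix (M : ι → ι → 𝕜) (α : ι) (i j : ι) : 𝕜 := M i j - M i α * M α j / M α α

def schurRhs (M : ι → ι → 𝕜) (c : ι → 𝕜) (α : ι) (i : ι) : 𝕜 := c i - M i α * c α / M α α

lemma sum_mul_update (hα : α ∈ J) (i : ι) (d : ι → 𝕜) (t : 𝕜) :
    ∑ j ∈ J, M i j * update d α t j = M i α * t + ∑ j ∈ J.erase α, M i j * d j := by
  rw [← add_sum_erase J _ hα, update_self]
  congr 1
  exact sum_congr rfl fun j hj => by rw [update_of_ne (ne_of_mem_erase hj)]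

lemma sum_schurMatrix_sub_schurRhs (hα : α ∈ J) (hpiv : M α α ≠ 0) (i : ι) (d : ι → 𝕜) :
    ∑ j ∈ J.erase α, schurMatrix M α i j * d j - schurRhs M c α i =
      ∑ j ∈ J, M i j * update d α (pivotValue J M c α d) j - c i := by
  have hsum : ∑ j ∈ J.erase α, M i α * M α j / M α α * d j =
      M i α / M α α * ∑ j ∈ J.erase α, M α j * d j := by
    rw [mul_sum]
    exact sum_congr rfl fun _ _ => by ring
  rw [sum_mul_update hα]
  simp only [schurMatrix, schurRhs, pivotValue, sub_mul, sum_sub_distrib, hsum]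
  field_simp
  ring

variable [LinearOrder 𝕜] [IsStrictOrderedRing 𝕜]

def IsNonnegSolution (J : Finset ι) (M : ι → ι → 𝕜) (c d : ι → 𝕜) : Prop :=
  ∀ i ∈ J, 0 ≤ d i ∧ c i ≤ ∑ j ∈ J, M i j * d j

lemma sum_erase_mul_nonpos (hZ : ∀ j ∈ J, α ≠ j → M α j ≤ 0)
    (hd : ∀ j ∈ J.erase α, 0 ≤ d j) : ∑ j ∈ J.erase α, M α j * d j ≤ 0 :=
  sum_nonpos fun j hj =>
    mul_nonpos_of_nonpos_of_nonneg (hZ j (mem_of_mem_erase hj) (ne_of_mem_erase hj).symm)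
      (hd j hj)

lemma schurMatrix_nonpos (hZ : ∀ i ∈ J, ∀ j ∈ J, i ≠ j → M i j ≤ 0) (hα : α ∈ J)
    (hpiv : 0 < M α α) {i j : ι} (hi : i ∈ J.erase α) (hj : j ∈ J.erase α) (hij : i ≠ j) :
    schurMatrix M α i j ≤ 0 := by
  obtain ⟨hiα, hiJ⟩ := mem_erase.1 hi
  obtain ⟨hjα, hjJ⟩ := mem_erase.1 hj
  have := div_nonneg (mul_nonneg_of_nonpos_of_nonpos (hZ i hiJ α hα hiα) (hZ α hα j hjJ hjα.symm))
    hpiv.le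
  rw [schurMatrix]
  linarith [hZ i hiJ j hjJ hij]

lemma pivotValue_mono (hZ : ∀ j ∈ J, α ≠ j → M α j ≤ 0) (hpiv : 0 < M α α) {d' : ι → 𝕜}
    (h : ∀ j ∈ J.erase α, d j ≤ d' j) : pivotValue J M c α d ≤ pivotValue J M c α d' := by
  refine div_le_div_of_nonneg_right (sub_le_sub_left (sum_le_sum fun j hj => ?_) _) hpiv.le
  exact mul_le_mul_of_nonpos_left (h j hj)
    (hZ j (mem_of_mem_erase hj) (ne_of_mem_erase hj).symm)

namespace IsNonnegSolution

lemma diag_pos (hd : IsNonnegSolution J M c d) (hZ : ∀ j ∈ J, α ≠ j → M α j ≤ 0)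
    (hα : α ∈ J) (hcα : 0 < c α) : 0 < M α α := by
  have hrow := (hd α hα).2
  rw [← add_sum_erase J _ hα] at hrow
  have := sum_erase_mul_nonpos hZ fun j hj => (hd j (mem_of_mem_erase hj)).1
  by_contra! h
  nlinarith [(hd α hα).1]

lemma pivotValue_le (hd : IsNonnegSolution J M c d) (hα : α ∈ J) (hpiv : 0 < M α α) :
    pivotValue J M c α d ≤ d α := by
  have hrow := (hd α hα).2
  rw [← add_sum_erase J _ hα] at hrow
  rw [pivotValue, div_le_iff₀ hpiv]
  linarith

lemma schur (hd : IsNonnegSolution J M c d) (hZ : ∀ i ∈ J, ∀ j ∈ J, i ≠ j → M i j ≤ 0)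
    (hα : α ∈ J) (hpiv : 0 < M α α) :
    IsNonnegSolution (J.erase α) (schurMatrix M α) (schurRhs M c α) d := by
  intro i hi
  obtain ⟨hiα, hiJ⟩ := mem_erase.1 hi
  refine ⟨(hd i hiJ).1, sub_nonneg.1 ?_⟩
  rw [sum_schurMatrix_sub_schurRhs hα hpiv.ne', sum_mul_update hα, sub_nonneg]
  calc c i ≤ ∑ j ∈ J, M i j * d j := (hd i hiJ).2
    _ = M i α * d α + ∑ j ∈ J.erase α, M i j * d j := (add_sum_erase J _ hα).symm
    _ ≤ M i α * pivotValue J M c α d + ∑ j ∈ J.erase α, M i j * d j := by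
        gcongr ?_ + _
        exact mul_le_mul_of_nonpos_left (hd.pivotValue_le hα hpiv) (hZ i hiJ α hα hiα)

lemma extend (hd : IsNonnegSolution (J.erase α) (schurMatrix M α) (schurRhs M c α) d)
    (hZ : ∀ j ∈ J, α ≠ j → M α j ≤ 0) (hα : α ∈ J) (hpiv : 0 < M α α) (hcα : 0 < c α) :
    IsNonnegSolution J M c (update d α (pivotValue J M c α d)) := by
  intro i hi
  obtain rfl | hiα := eq_or_ne i α
  · refine ⟨?_, ?_⟩
    · have := sum_erase_mul_nonpos hZ fun j hj => (hd j hj).1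
      rw [update_self, pivotValue]
      exact div_nonneg (by linarith) hpiv.le
    · rw [sum_mul_update hα, pivotValue, mul_div_cancel₀ _ hpiv.ne']
      simp
  · have hi' : i ∈ J.erase α := mem_erase.2 ⟨hiα, hi⟩
    refine ⟨by rw [update_of_ne hiα]; exact (hd i hi').1, sub_nonneg.1 ?_⟩
    rw [← sum_schurMatrix_sub_schurRhs hα hpiv.ne', sub_nonneg]
    exact (hd i hi').2

end IsNonnegSolution

theorem exists_least_isNonnegSolution (hZ : ∀ i ∈ J, ∀ j ∈ J, i ≠ j → M i j ≤ 0)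
    (hsol : ∃ d, IsNonnegSolution J M c d) :
    ∃ m, IsNonnegSolution J M c m ∧ ∀ d, IsNonnegSolution J M c d → ∀ i ∈ J, m i ≤ d i := by
  induction J using Finset.strongInduction generalizing M c with
  | H J ih =>
  obtain ⟨d, hd⟩ := hsol
  by_cases hc : ∃ α ∈ J, 0 < c α
  swap
  · refine ⟨0, fun i hi => ⟨le_rfl, ?_⟩, fun d hd i hi => (hd i hi).1⟩
    simpa using not_lt.1 fun h => hc ⟨i, hi, h⟩
  obtain ⟨α, hα, hcα⟩ := hc
  have hpiv := hd.diag_pos (hZ α hα) hα hcα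
  obtain ⟨m, hm, hleast⟩ := ih _ (erase_ssubset hα)
    (fun i hi j hj => schurMatrix_nonpos hZ hα hpiv hi hj) ⟨d, hd.schur hZ hα hpiv⟩
  refine ⟨_, hm.extend (hZ α hα) hα hpiv hcα, fun d hd i hi => ?_⟩
  have hmd := hleast d (hd.schur hZ hα hpiv)
  obtain rfl | hiα := eq_or_ne i α
  · rw [update_self]
    exact (pivotValue_mono (hZ i hi) hpiv hmd).trans (hd.pivotValue_le hi hpiv)
  · rw [update_of_ne hiα]
    exact hmd i (mem_erase.2 ⟨hiα, hi⟩)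

end LeastSolution

namespace RootSystemData

open scoped Classical

section dAct

variable {V : Type} [AddCommGroup V] [Module ℚ V]

lemma dAct_apply (w : V ≃ₗ[ℚ] V) (ν : Module.Dual ℚ V) (x : V) : dAct w ν x = ν (w.symm x) := rfl

lemma dAct_mul (w w' : V ≃ₗ[ℚ] V) (ν : Module.Dual ℚ V) :
    dAct (w * w') ν = dAct w (dAct w' ν) := rfl

end dAct

variable {V : Type} [AddCommGroup V] [Module ℚ V] [FiniteDimensional ℚ V] (R : RootSystemData V)
  {α β γ : V} {l : List V}

lemma root_ne_zero (h : β ∈ R.Φ) : β ≠ 0 := fun e => R.zero_notin (e ▸ h)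

lemma coeff_eq_of_sum_eq {c c' : V → ℚ} (h : ∑ α ∈ R.Δ, c α • α = ∑ α ∈ R.Δ, c' α • α)
    (hγ : γ ∈ R.Δ) : c γ = c' γ := by
  refine sub_eq_zero.1 (Fintype.linearIndependent_iff.1 R.Δ_indep (fun a => c a - c' a) ?_ ⟨γ, hγ⟩)
  rw [univ_eq_attach, sum_attach R.Δ fun a => (c a - c' a) • a]
  simp only [sub_smul, sum_sub_distrib, h, sub_self]

lemma exists_coeff_of_mem_pos (h : β ∈ R.pos) :
    ∃ c : V → ℚ, (∀ α, 0 ≤ c α) ∧ β = ∑ α ∈ R.Δ, c α • α :=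
  (R.mem_pos_iff β (R.pos_sub h)).1 h

lemma sum_single_smul (hγ : γ ∈ R.Δ) (k : ℚ) :
    ∑ α ∈ R.Δ, (Pi.single γ k : V → ℚ) α • α = k • γ := by
  rw [sum_eq_single_of_mem γ hγ fun α _ h => by simp [h]]
  simp

lemma neg_notMem_pos (h : β ∈ R.pos) : -β ∉ R.pos := by
  intro h'
  obtain ⟨c, hc, rfl⟩ := R.exists_coeff_of_mem_pos h
  obtain ⟨c', hc', hc'eq⟩ := R.exists_coeff_of_mem_pos h'
  have hzero : ∀ α ∈ R.Δ, c α = 0 := fun α hα => by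
    have : (c + c') α = (0 : V → ℚ) α :=
      R.coeff_eq_of_sum_eq (by simp [add_smul, sum_add_distrib, ← hc'eq]) hα
    linarith [hc α, hc' α, show c α + c' α = 0 from this]
  exact R.root_ne_zero (R.pos_sub h) (sum_eq_zero fun α hα => by simp [hzero α hα])

lemma mem_pos_of_coeff_pos (hβ : β ∈ R.Φ) {c : V → ℚ} (hc : β = ∑ α ∈ R.Δ, c α • α)
    (hγ : γ ∈ R.Δ) (hcγ : 0 < c γ) : β ∈ R.pos := by
  refine (R.pos_or_neg β hβ).resolve_right fun h => ?_
  obtain ⟨c', hc', hc'eq⟩ := R.exists_coeff_of_mem_pos h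
  have : -c' γ = c γ := R.coeff_eq_of_sum_eq (c := -c')
    (by simp [neg_smul, sum_neg_distrib, ← hc'eq, ← hc]) hγ
  linarith [hc' γ]

lemma simple_mem_pos (hγ : γ ∈ R.Δ) : γ ∈ R.pos :=
  R.mem_pos_of_coeff_pos (R.Δ_sub hγ) (c := Pi.single γ (1 : ℚ))
    (by rw [R.sum_single_smul hγ, one_smul]) hγ (by simp)

-- Junk value: the identity when `α ∉ Φ`.
noncomputable def sRef (α : V) : V ≃ₗ[ℚ] V :=
  if h : α ∈ R.Φ then Module.reflection (R.coroot_self α h) else LinearEquiv.refl ℚ V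

lemma sRef_of_mem (h : α ∈ R.Φ) : R.sRef α = Module.reflection (R.coroot_self α h) := dif_pos h

lemma sRef_apply (h : α ∈ R.Φ) (x : V) : R.sRef α x = x - R.coroot α x • α := by
  rw [R.sRef_of_mem h, Module.reflection_apply]

lemma sRef_symm (h : α ∈ R.Φ) : (R.sRef α).symm = R.sRef α := by
  rw [R.sRef_of_mem h, Module.reflection_symm]

lemma sRef_sRef (h : α ∈ R.Φ) (x : V) : R.sRef α (R.sRef α x) = x := by
  rw [R.sRef_of_mem h]
  exact Module.involutive_reflection (R.coroot_self α h) x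

lemma sRef_mul_self (h : α ∈ R.Φ) : R.sRef α * R.sRef α = 1 :=
  LinearEquiv.ext (R.sRef_sRef h)

lemma sRef_apply_self (h : α ∈ R.Φ) : R.sRef α α = -α := by
  rw [R.sRef_apply h, R.coroot_self α h, two_smul, sub_add_cancel_left]

lemma sRef_mem_W (h : α ∈ R.Φ) : R.sRef α ∈ R.W := by
  rw [R.weyl_gen, R.sRef_of_mem h]
  exact Subgroup.subset_closure ⟨α, h, rfl⟩

lemma sRef_mem_Φ (hα : α ∈ R.Φ) (hβ : β ∈ R.Φ) : R.sRef α β ∈ R.Φ := by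
  rw [R.sRef_apply hα]
  exact R.reflect_root α hα β hβ

lemma dAct_sRef (h : α ∈ R.Φ) (ν : Module.Dual ℚ V) :
    dAct (R.sRef α) ν = ν - ν α • R.coroot α := by
  ext x
  simp [dAct_apply, R.sRef_symm h, R.sRef_apply h, mul_comm]

lemma coroot_sRef (hα : α ∈ R.Φ) (hβ : β ∈ R.Φ) :
    R.coroot (R.sRef α β) = dAct (R.sRef α) (R.coroot β) := by
  ext x
  rw [dAct_apply, R.sRef_symm hα, R.sRef_apply hα β, R.sRef_apply hα x]
  exact R.reflect_coroot α hα β hβ x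

lemma sRef_mem_pos (hγ : γ ∈ R.Δ) (hβ : β ∈ R.pos) (hne : β ≠ γ) :
    R.sRef γ β ∈ R.pos ∧ R.sRef γ β ≠ γ := by
  obtain ⟨c, hc, hβc⟩ := R.exists_coeff_of_mem_pos hβ
  obtain ⟨δ, hδ, hδγ, hcδ⟩ : ∃ δ ∈ R.Δ, δ ≠ γ ∧ 0 < c δ := by
    by_contra! h
    have hβγ : β = c γ • γ := by
      rw [hβc, sum_eq_single_of_mem γ hγ fun δ hδ hδγ => by
        rw [le_antisymm (h δ hδ hδγ) (hc δ), zero_smul]]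
    rcases R.reduced γ (R.Δ_sub hγ) (c γ) (hβγ ▸ R.pos_sub hβ) with h1 | h1
    · exact hne (by rw [hβγ, h1, one_smul])
    · linarith [hc γ]
  have hsum : R.sRef γ β = ∑ α ∈ R.Δ, (c - Pi.single γ (R.coroot γ β) : V → ℚ) α • α := by
    simp only [Pi.sub_apply, sub_smul, sum_sub_distrib, R.sum_single_smul hγ, ← hβc]
    exact R.sRef_apply (R.Δ_sub hγ) β
  have hcoeff : 0 < (c - Pi.single γ (R.coroot γ β) : V → ℚ) δ := by simpa [hδγ] using hcδ
  refine ⟨R.mem_pos_of_coeff_pos (R.sRef_mem_Φ (R.Δ_sub hγ) (R.pos_sub hβ)) hsum hδ hcoeff,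
    fun h => ?_⟩
  have : (c - Pi.single γ (R.coroot γ β) : V → ℚ) δ = (Pi.single γ 1 : V → ℚ) δ :=
    R.coeff_eq_of_sum_eq (by rw [← hsum, h, R.sum_single_smul hγ, one_smul]) hδ
  simp [hδγ] at this
  linarith

noncomputable def sumPosCoroot : Module.Dual ℚ V := ∑ β ∈ R.pos, R.coroot β

lemma sumPosCoroot_apply_simple (hγ : γ ∈ R.Δ) : R.sumPosCoroot γ = 2 := by
  have hγΦ := R.Δ_sub hγ
  rw [sumPosCoroot, LinearMap.sum_apply, ← add_sum_erase _ _ (R.simple_mem_pos hγ),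
    R.coroot_self γ hγΦ, add_eq_left]
  have hodd : ∀ β ∈ R.pos, R.coroot (R.sRef γ β) γ = -R.coroot β γ := fun β hβ => by
    rw [R.coroot_sRef hγΦ (R.pos_sub hβ), dAct_apply, R.sRef_symm hγΦ, R.sRef_apply_self hγΦ,
      map_neg]
  refine sum_involution (fun β _ => R.sRef γ β) (fun β hβ => ?_) (fun β hβ h he => ?_)
    (fun β hβ => ?_) (fun β _ => R.sRef_sRef hγΦ β)
  · rw [hodd β (mem_of_mem_erase hβ), add_neg_cancel]
  · have := hodd β (mem_of_mem_erase hβ)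
    rw [he] at this
    exact h (by linarith)
  · obtain ⟨hβγ, hβ⟩ := mem_erase.1 hβ
    obtain ⟨h1, h2⟩ := R.sRef_mem_pos hγ hβ hβγ
    exact mem_erase.2 ⟨h2, h1⟩

lemma neg_mem_Φ (h : β ∈ R.Φ) : -β ∈ R.Φ := R.sRef_apply_self h ▸ R.sRef_mem_Φ h h

lemma apply_mem_Φ_iff {w : V ≃ₗ[ℚ] V} (hw : w ∈ R.W) : w β ∈ R.Φ ↔ β ∈ R.Φ := by
  rw [R.weyl_gen] at hw
  induction hw using Subgroup.closure_induction generalizing β with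
  | mem w hw =>
    obtain ⟨α, hα, rfl⟩ := hw
    rw [← R.sRef_of_mem hα]
    exact ⟨fun h => R.sRef_sRef hα β ▸ R.sRef_mem_Φ hα h, R.sRef_mem_Φ hα⟩
  | one => rfl
  | mul w w' _ _ ih ih' => exact ih.trans ih'
  | inv w _ ih => rw [← ih, ← LinearEquiv.mul_apply, mul_inv_cancel]; rfl

instance : Finite R.W := by
  refine Finite.of_injective (fun w (β : R.Φ) => (⟨w.1 β, (R.apply_mem_Φ_iff w.2).2 β.2⟩ : R.Φ))
    fun w w' h => Subtype.ext (LinearEquiv.toLinearMap_injective ?_)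
  exact LinearMap.ext_on R.span_Φ fun β hβ => congrArg Subtype.val (congrFun h ⟨β, hβ⟩)

noncomputable instance : Fintype R.W := Fintype.ofFinite _

noncomputable def invForm : LinearMap.BilinForm ℚ V :=
  ∑ w : R.W, (dotProductBilin ℚ ℚ).compl₁₂
    ((Module.finBasis ℚ V).equivFun.toLinearMap ∘ₗ w.1.toLinearMap)
    ((Module.finBasis ℚ V).equivFun.toLinearMap ∘ₗ w.1.toLinearMap)

lemma invForm_apply (x y : V) :
    R.invForm x y = ∑ w : R.W,
      (Module.finBasis ℚ V).equivFun (w.1 x) ⬝ᵥ (Module.finBasis ℚ V).equivFun (w.1 y) := by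
  simp [invForm]

lemma invForm_self_pos {x : V} (hx : x ≠ 0) : 0 < R.invForm x x := by
  rw [invForm_apply]
  refine sum_pos' (fun w _ => sum_nonneg fun i _ => mul_self_nonneg _) ⟨1, mem_univ _, ?_⟩
  exact lt_of_le_of_ne (sum_nonneg fun i _ => mul_self_nonneg _)
    (Ne.symm (dotProduct_self_eq_zero.not.2 ((LinearEquiv.map_ne_zero_iff _).2 hx)))

lemma invForm_apply_apply {w : V ≃ₗ[ℚ] V} (hw : w ∈ R.W) (x y : V) :
    R.invForm (w x) (w y) = R.invForm x y := by
  simp only [invForm_apply]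
  exact Fintype.sum_equiv (Equiv.mulRight ⟨w, hw⟩) _ _ fun _ => by
    simp only [Equiv.coe_mulRight, Subgroup.coe_mul, LinearEquiv.mul_apply]

lemma coroot_eq_invForm_div (hα : α ∈ R.Φ) (x : V) :
    R.coroot α x = 2 * R.invForm x α / R.invForm α α := by
  have := R.invForm_apply_apply (R.sRef_mem_W hα) x α
  rw [R.sRef_apply_self hα, R.sRef_apply hα] at this
  simp only [map_sub, map_smul, map_neg, LinearMap.sub_apply, LinearMap.smul_apply,
    smul_eq_mul] at this
  rw [eq_div_iff (R.invForm_self_pos (R.root_ne_zero hα)).ne']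
  linarith

lemma coroot_apply_simple_nonpos (hα : α ∈ R.Δ) (hγ : γ ∈ R.Δ) (hne : γ ≠ α) :
    R.coroot α γ ≤ 0 := by
  by_contra! hk
  have hmem := R.sRef_mem_Φ (R.Δ_sub hα) (R.Δ_sub hγ)
  have hsum : R.sRef α γ =
      ∑ x ∈ R.Δ, (Pi.single γ 1 - Pi.single α (R.coroot α γ) : V → ℚ) x • x := by
    simp [sub_smul, sum_sub_distrib, R.sum_single_smul hγ, R.sum_single_smul hα,
      R.sRef_apply (R.Δ_sub hα)]
  have hpos := R.mem_pos_of_coeff_pos hmem hsum hγ (by simp [hne])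
  refine R.neg_notMem_pos hpos (R.mem_pos_of_coeff_pos (R.neg_mem_Φ hmem)
    (c := Pi.single α (R.coroot α γ) - Pi.single γ 1) ?_ hα (by simpa [hne.symm] using hk))
  rw [hsum, ← sum_neg_distrib]
  exact sum_congr rfl fun x _ => by rw [← neg_smul, Pi.sub_apply, Pi.sub_apply, neg_sub]

lemma exists_coroot_eq_sum (hβ : β ∈ R.pos) :
    ∃ e : V → ℚ, (∀ α ∈ R.Δ, 0 ≤ e α) ∧ R.coroot β = ∑ α ∈ R.Δ, e α • R.coroot α := by
  obtain ⟨c, hc, hβc⟩ := R.exists_coeff_of_mem_pos hβ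
  have hpos : ∀ {α}, α ∈ R.Φ → 0 < R.invForm α α := fun h => R.invForm_self_pos (R.root_ne_zero h)
  refine ⟨fun α => c α * R.invForm α α / R.invForm β β,
    fun α hα => div_nonneg (mul_nonneg (hc α) (hpos (R.Δ_sub hα)).le) (hpos (R.pos_sub hβ)).le, ?_⟩
  ext x
  have hB : R.invForm x β = ∑ α ∈ R.Δ, c α * R.invForm x α := by
    conv_lhs => rw [hβc]
    simp [map_sum]
  rw [R.coroot_eq_invForm_div (R.pos_sub hβ), hB, LinearMap.sum_apply, mul_sum, sum_div]
  refine sum_congr rfl fun α hα => ?_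
  rw [LinearMap.smul_apply, R.coroot_eq_invForm_div (R.Δ_sub hα), smul_eq_mul]
  field_simp [(hpos (R.Δ_sub hα)).ne']

lemma le.refl (ν : Module.Dual ℚ V) : R.le ν ν := ⟨0, fun _ => le_rfl, by simp⟩

variable {R} in
lemma le.trans {ν₁ ν₂ ν₃ : Module.Dual ℚ V} (h₁ : R.le ν₁ ν₂) (h₂ : R.le ν₂ ν₃) :
    R.le ν₁ ν₃ := by
  obtain ⟨c, hc, h₁⟩ := h₁
  obtain ⟨c', hc', h₂⟩ := h₂
  refine ⟨c + c', fun β => add_nonneg (hc β) (hc' β), ?_⟩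
  rw [← sub_add_sub_cancel ν₃ ν₂ ν₁, h₁, h₂, ← sum_add_distrib]
  simp [add_smul, add_comm]

lemma sub_smul_coroot_le (hβ : β ∈ R.pos) {t : ℚ} (ht : 0 ≤ t) (ν : Module.Dual ℚ V) :
    R.le (ν - t • R.coroot β) ν := by
  refine ⟨Pi.single β t, fun γ => ?_, ?_⟩
  · by_cases h : γ = β <;> simp [h, ht]
  · rw [sub_sub_cancel, sum_eq_single_of_mem β hβ fun γ _ h => by simp [h]]
    simp

lemma le_iff_exists_simple {ν ν' : Module.Dual ℚ V} :
    R.le ν ν' ↔ ∃ d : V → ℚ, (∀ α ∈ R.Δ, 0 ≤ d α) ∧ ν' = ν + ∑ α ∈ R.Δ, d α • R.coroot α := by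
  refine ⟨fun ⟨c, hc, h⟩ => ?_, fun ⟨d, hd, h⟩ => ?_⟩
  · choose e he hβe using fun β (hβ : β ∈ R.pos) => R.exists_coroot_eq_sum hβ
    refine ⟨fun α => ∑ β ∈ R.pos.attach, c β * e β.1 β.2 α,
      fun α hα => sum_nonneg fun β _ => mul_nonneg (hc β) (he β.1 β.2 α hα), ?_⟩
    rw [← sub_eq_iff_eq_add', h, ← sum_attach]
    simp only [hβe _ (coe_mem _), smul_sum, smul_smul, sum_smul]
    exact sum_comm
  · refine ⟨fun β => if β ∈ R.Δ then d β else 0, fun β => ?_, ?_⟩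
    · by_cases hβ : β ∈ R.Δ <;> simp [hβ, hd β]
    · rw [h, add_sub_cancel_left, ← sum_subset (fun α hα => R.simple_mem_pos hα)
        fun β _ hβ => by simp [hβ]]
      exact sum_congr rfl fun α hα => by simp [hα]

lemma exists_isDominant_le (χ : Module.Dual ℚ V) : ∃ ν, R.IsDominant ν ∧ R.le χ ν := by
  set t := ∑ γ ∈ R.Δ, |χ γ|
  refine ⟨χ + t • R.sumPosCoroot, fun γ hγ => ?_,
    ⟨fun _ => t, fun _ => sum_nonneg fun _ _ => abs_nonneg _, ?_⟩⟩
  · have : |χ γ| ≤ t := single_le_sum (f := fun γ => |χ γ|) (fun _ _ => abs_nonneg _) hγ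
    simp only [LinearMap.add_apply, LinearMap.smul_apply, R.sumPosCoroot_apply_simple hγ,
      smul_eq_mul]
    linarith [neg_abs_le (χ γ), abs_nonneg (χ γ)]
  · rw [add_sub_cancel_left, sumPosCoroot, smul_sum]

lemma isNonnegSolution_cartan_iff (χ : Module.Dual ℚ V) (d : V → ℚ) :
    IsNonnegSolution R.Δ (fun γ α => R.coroot α γ) (fun γ => -χ γ) d ↔
      (∀ α ∈ R.Δ, 0 ≤ d α) ∧ R.IsDominant (χ + ∑ α ∈ R.Δ, d α • R.coroot α) := by
  simp only [IsNonnegSolution, IsDominant, forall_and, LinearMap.add_apply, LinearMap.sum_apply,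
    LinearMap.smul_apply, smul_eq_mul, neg_le_iff_add_nonneg, mul_comm (d _), add_comm (χ _)]

lemma exists_least_isDominant_le (χ : Module.Dual ℚ V) :
    ∃ ν₀, (R.IsDominant ν₀ ∧ R.le χ ν₀) ∧ ∀ ν, R.IsDominant ν → R.le χ ν → R.le ν₀ ν := by
  obtain ⟨ν, hν, hχν⟩ := R.exists_isDominant_le χ
  obtain ⟨d, hd, rfl⟩ := R.le_iff_exists_simple.1 hχν
  obtain ⟨m, hm, hleast⟩ := exists_least_isNonnegSolution
    (fun γ hγ α hα h => R.coroot_apply_simple_nonpos hα hγ h)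
    ⟨d, (R.isNonnegSolution_cartan_iff χ d).2 ⟨hd, hν⟩⟩
  obtain ⟨hm₀, hmdom⟩ := (R.isNonnegSolution_cartan_iff χ m).1 hm
  refine ⟨_, ⟨hmdom, R.le_iff_exists_simple.2 ⟨m, hm₀, rfl⟩⟩, fun ν hν hχν => ?_⟩
  obtain ⟨d, hd, rfl⟩ := R.le_iff_exists_simple.1 hχν
  have hmd := hleast d ((R.isNonnegSolution_cartan_iff χ d).2 ⟨hd, hν⟩)
  refine R.le_iff_exists_simple.2 ⟨d - m, fun α hα => sub_nonneg.2 (hmd α hα), ?_⟩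
  simp only [Pi.sub_apply, sub_smul, sum_sub_distrib]
  abel

noncomputable def reflProd (l : List V) : V ≃ₗ[ℚ] V := (l.map R.sRef).prod

@[simp] lemma reflProd_nil : R.reflProd [] = 1 := rfl

@[simp] lemma reflProd_cons (a : V) (l : List V) :
    R.reflProd (a :: l) = R.sRef a * R.reflProd l := by
  simp [reflProd]

@[simp] lemma reflProd_append (l l' : List V) :
    R.reflProd (l ++ l') = R.reflProd l * R.reflProd l' := by
  simp [reflProd]

lemma reflProd_reverse (hl : ∀ a ∈ l, a ∈ R.Φ) : R.reflProd l.reverse = (R.reflProd l)⁻¹ := by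
  induction l with
  | nil => simp
  | cons a l ih =>
    rw [List.forall_mem_cons] at hl
    rw [List.reverse_cons, reflProd_append, ih hl.2, reflProd_cons, reflProd_cons, reflProd_nil,
      mul_one, mul_inv_rev, inv_eq_of_mul_eq_one_right (R.sRef_mul_self hl.1)]

lemma reflProd_apply_mem (hl : ∀ a ∈ l, a ∈ R.Φ) (hβ : β ∈ R.Φ) : R.reflProd l β ∈ R.Φ := by
  induction l with
  | nil => exact hβ
  | cons a l ih =>
    rw [List.forall_mem_cons] at hl
    exact R.sRef_mem_Φ hl.1 (ih hl.2)

lemma coroot_reflProd_apply (hl : ∀ a ∈ l, a ∈ R.Φ) (hβ : β ∈ R.Φ) :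
    R.coroot (R.reflProd l β) = dAct (R.reflProd l) (R.coroot β) := by
  induction l with
  | nil => rfl
  | cons a l ih =>
    rw [List.forall_mem_cons] at hl
    rw [reflProd_cons, LinearEquiv.mul_apply, R.coroot_sRef hl.1 (R.reflProd_apply_mem hl.2 hβ),
      ih hl.2, dAct_mul]

lemma sRef_reflProd_apply (hl : ∀ a ∈ l, a ∈ R.Φ) (hβ : β ∈ R.Φ) :
    R.sRef (R.reflProd l β) = R.reflProd l * R.sRef β * (R.reflProd l)⁻¹ := by
  ext x
  rw [R.sRef_apply (R.reflProd_apply_mem hl hβ), R.coroot_reflProd_apply hl hβ, dAct_apply]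
  simp [R.sRef_apply hβ]

-- The exchange condition.
lemma exists_reflProd_eq_mul_sRef (hl : ∀ a ∈ l, a ∈ R.Δ) (hα : α ∈ R.Δ)
    (hneg : -R.reflProd l α ∈ R.pos) :
    ∃ l', (∀ a ∈ l', a ∈ R.Δ) ∧ l'.length + 1 = l.length ∧
      R.reflProd l' = R.reflProd l * R.sRef α := by
  induction l with
  | nil => exact absurd hneg (R.neg_notMem_pos (R.simple_mem_pos hα))
  | cons γ l ih =>
    rw [List.forall_mem_cons] at hl
    have hlΦ : ∀ a ∈ l, a ∈ R.Φ := fun a ha => R.Δ_sub (hl.2 a ha)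
    rw [reflProd_cons, LinearEquiv.mul_apply] at hneg
    rcases R.pos_or_neg _ (R.reflProd_apply_mem hlΦ (R.Δ_sub hα)) with hpos | hneg'
    · obtain rfl : R.reflProd l α = γ := by
        by_contra hne
        exact R.neg_notMem_pos (R.sRef_mem_pos hl.1 hpos hne).1 hneg
      refine ⟨l, hl.2, rfl, ?_⟩
      rw [reflProd_cons, R.sRef_reflProd_apply hlΦ (R.Δ_sub hα), inv_mul_cancel_right, mul_assoc,
        R.sRef_mul_self (R.Δ_sub hα), mul_one]
    · obtain ⟨l', hl', hlen, h⟩ := ih hl.2 hneg'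
      refine ⟨γ :: l', List.forall_mem_cons.2 ⟨hl.1, hl'⟩, by simp [← hlen], ?_⟩
      rw [reflProd_cons, reflProd_cons, h, mul_assoc]

lemma exists_simple_coroot_apply_pos (hβ : β ∈ R.pos) : ∃ α ∈ R.Δ, 0 < R.coroot α β := by
  obtain ⟨c, hc, hβc⟩ := R.exists_coeff_of_mem_pos hβ
  have hsum : ∑ α ∈ R.Δ, (0 : ℚ) < ∑ α ∈ R.Δ, c α * R.invForm β α :=
    calc ∑ α ∈ R.Δ, (0 : ℚ) = 0 := sum_const_zero
      _ < R.invForm β β := R.invForm_self_pos (R.root_ne_zero (R.pos_sub hβ))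
      _ = R.invForm β (∑ α ∈ R.Δ, c α • α) := by rw [← hβc]
      _ = ∑ α ∈ R.Δ, c α * R.invForm β α := by simp
  obtain ⟨α, hα, hlt⟩ := exists_lt_of_sum_lt hsum
  refine ⟨α, hα, ?_⟩
  rw [R.coroot_eq_invForm_div (R.Δ_sub hα)]
  have := R.invForm_self_pos (R.root_ne_zero (R.Δ_sub hα))
  have : 0 < R.invForm β α := pos_of_mul_pos_right hlt (hc α)
  positivity

lemma exists_reflProd_apply_simple_eq_of_mem_pos {β : V} (hβ : β ∈ R.pos) :
    ∃ l α, (∀ a ∈ l, a ∈ R.Δ) ∧ α ∈ R.Δ ∧ R.reflProd l α = β := by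
  obtain ⟨α, hα, hαβ⟩ := R.exists_simple_coroot_apply_pos hβ
  by_cases hβα : β = α
  · exact ⟨[], α, by simp, hα, by simp [hβα]⟩
  have hγ := (R.sRef_mem_pos hα hβ hβα).1
  have hlt : R.sumPosCoroot (R.sRef α β) < R.sumPosCoroot β := by
    rw [R.sRef_apply (R.Δ_sub hα), map_sub, map_smul, R.sumPosCoroot_apply_simple hα]
    simp only [smul_eq_mul]
    linarith
  obtain ⟨l, α', hl, hα', h⟩ := exists_reflProd_apply_simple_eq_of_mem_pos hγ
  exact ⟨α :: l, α', List.forall_mem_cons.2 ⟨hα, hl⟩, hα', by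
    rw [reflProd_cons, LinearEquiv.mul_apply, h, R.sRef_sRef (R.Δ_sub hα)]⟩
termination_by (R.pos.filter fun δ => R.sumPosCoroot δ < R.sumPosCoroot β).card
decreasing_by
  refine card_lt_card (Finset.ssubset_iff_of_subset ?_ |>.2 ⟨R.sRef α β, ?_, ?_⟩)
  · exact fun δ hδ => mem_filter.2 ⟨(mem_filter.1 hδ).1, (mem_filter.1 hδ).2.trans hlt⟩
  · exact mem_filter.2 ⟨hγ, hlt⟩
  · exact fun h => lt_irrefl _ (mem_filter.1 h).2

lemma exists_reflProd_apply_simple_eq (hβ : β ∈ R.Φ) :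
    ∃ l α, (∀ a ∈ l, a ∈ R.Δ) ∧ α ∈ R.Δ ∧ R.reflProd l α = β := by
  rcases R.pos_or_neg β hβ with hpos | hneg
  · exact R.exists_reflProd_apply_simple_eq_of_mem_pos hpos
  · obtain ⟨l, α, hl, hα, h⟩ := R.exists_reflProd_apply_simple_eq_of_mem_pos hneg
    refine ⟨l ++ [α], α, List.forall_mem_append.2 ⟨hl, List.forall_mem_singleton.2 hα⟩, hα, ?_⟩
    rw [reflProd_append, LinearEquiv.mul_apply, reflProd_cons, reflProd_nil, mul_one,
      R.sRef_apply_self (R.Δ_sub hα), map_neg, h, neg_neg]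

lemma exists_reflProd_eq_of_mem_W {w : V ≃ₗ[ℚ] V} (hw : w ∈ R.W) :
    ∃ l, (∀ a ∈ l, a ∈ R.Δ) ∧ R.reflProd l = w := by
  rw [R.weyl_gen] at hw
  induction hw using Subgroup.closure_induction with
  | mem w hw =>
    obtain ⟨β, hβ, rfl⟩ := hw
    obtain ⟨l, α, hl, hα, rfl⟩ := R.exists_reflProd_apply_simple_eq hβ
    have hlΦ : ∀ a ∈ l, a ∈ R.Φ := fun a ha => R.Δ_sub (hl a ha)
    refine ⟨l ++ [α] ++ l.reverse, ?_, ?_⟩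
    · simp only [List.forall_mem_append, List.forall_mem_singleton, List.mem_reverse]
      exact ⟨⟨hl, hα⟩, hl⟩
    rw [← R.sRef_of_mem hβ, R.sRef_reflProd_apply hlΦ (R.Δ_sub hα), reflProd_append,
      reflProd_append, R.reflProd_reverse hlΦ, reflProd_cons, reflProd_nil, mul_one]
  | one => exact ⟨[], by simp, rfl⟩
  | mul w w' _ _ ih ih' =>
    obtain ⟨l, hl, rfl⟩ := ih
    obtain ⟨l', hl', rfl⟩ := ih'
    exact ⟨l ++ l', List.forall_mem_append.2 ⟨hl, hl'⟩, reflProd_append R l l'⟩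
  | inv w _ ih =>
    obtain ⟨l, hl, rfl⟩ := ih
    exact ⟨l.reverse, by simpa using hl, R.reflProd_reverse fun a ha => R.Δ_sub (hl a ha)⟩

lemma dAct_reflProd_le {l : List V} (hl : ∀ a ∈ l, a ∈ R.Δ) {μ : Module.Dual ℚ V}
    (hμ : R.IsDominant μ) : R.le (dAct (R.reflProd l) μ) μ := by
  rcases l.eq_nil_or_concat with rfl | ⟨l', α, rfl⟩
  · exact le.refl R μ
  simp only [List.concat_eq_append, List.forall_mem_append, List.forall_mem_singleton] at hl
  have hl'Φ : ∀ a ∈ l', a ∈ R.Φ := fun a ha => R.Δ_sub (hl.1 a ha)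
  have hαΦ := R.Δ_sub hl.2
  rw [List.concat_eq_append, reflProd_append, reflProd_cons, reflProd_nil, mul_one]
  rcases R.pos_or_neg _ (R.reflProd_apply_mem hl'Φ hαΦ) with hpos | hneg
  · have : dAct (R.reflProd l' * R.sRef α) μ =
        dAct (R.reflProd l') μ - μ α • R.coroot (R.reflProd l' α) := by
      rw [dAct_mul, R.dAct_sRef hαΦ, R.coroot_reflProd_apply hl'Φ hαΦ]
      rfl
    rw [this]
    exact (R.sub_smul_coroot_le hpos (hμ α hl.2) _).trans (dAct_reflProd_le hl.1 hμ)
  · obtain ⟨l'', hl'', hlen, h⟩ := R.exists_reflProd_eq_mul_sRef hl.1 hl.2 hneg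
    rw [← h]
    exact dAct_reflProd_le hl'' hμ
termination_by l.length
decreasing_by all_goals subst_vars; simp only [List.length_concat]; omega

lemma le_of_dAct_eq_isDominant {w : V ≃ₗ[ℚ] V} (hw : w ∈ R.W) {χ χdom : Module.Dual ℚ V}
    (hdom : R.IsDominant χdom) (h : dAct w χ = χdom) : R.le χ χdom := by
  obtain ⟨l, hl, hlw⟩ := R.exists_reflProd_eq_of_mem_W (R.W.inv_mem hw)
  have : dAct (R.reflProd l) χdom = χ := by rw [hlw, ← h, ← dAct_mul, inv_mul_cancel]; rfl
  exact this ▸ R.dAct_reflProd_le hl hdom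

end RootSystemData

/-- Lemma 6.1 (combinatorial content): for every `χ ∈ V∨`, the set
`D(χ) = {ν ∈ V∨ : ν dominant, χ ≤ ν}` is nonempty and has a least element `ν(χ)`;
moreover `ν(χ) ≤ χ_dom` for the unique dominant element `χ_dom` in the Weyl group
orbit of `χ`. -/
theorem exists_least_dominant_above {V : Type} [AddCommGroup V] [Module ℚ V]
    [FiniteDimensional ℚ V] (R : RootSystemData V) (χ : Module.Dual ℚ V) :
    ∃ ν₀ : Module.Dual ℚ V,
      (R.IsDominant ν₀ ∧ R.le χ ν₀) ∧
      (∀ ν : Module.Dual ℚ V, R.IsDominant ν → R.le χ ν → R.le ν₀ ν) ∧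
      (∀ χdom : Module.Dual ℚ V, R.IsDominant χdom →
        (∃ w ∈ R.W, RootSystemData.dAct w χ = χdom) → R.le ν₀ χdom) := by
  obtain ⟨ν₀, hν₀, hleast⟩ := R.exists_least_isDominant_le χ
  exact ⟨ν₀, hν₀, hleast, fun χdom hdom ⟨w, hw, h⟩ =>
    hleast χdom hdom (R.le_of_dAct_eq_isDominant hw hdom h)⟩
end

section
/- Let χ ∈ V∨ and let ν ∈ V∨ be dominant with χ ≤ ν. Then ν is the least element of the set {ν' ∈ V∨ : ν' dominant, χ ≤ ν'} if and only if ⟨ω_α, ν − χ⟩ = 0 for every simple root α ∈ Δ with ⟨α, ν⟩ > 0, where ω_α denotes the fundamental weight associated to α. (Combinatorial content of Lemma 6.2(1) of the paper, characterizing the Newton point of b(λ).) -/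
/-!
Expanding in the simple coroots, `μ = ∑_{α ∈ Δ} ⟨ω_α, μ⟩ α∨`, the order `χ ≤ ν'` says exactly
that every coefficient `⟨ω_α, ν' - χ⟩` is non-negative; the non-trivial half is that positive
coroots have non-negative coefficients, which comes from the identity
`∑_{γ ∈ Φ} ⟨γ, β∨⟩ γ = c_β β` with `c_β > 0`. If `⟨α, ν⟩ > 0` and `⟨ω_α, ν - χ⟩ > 0`, then
`ν - t α∨` is, for small `t > 0`, still dominant and above `χ`, so `ν` is not least. Conversely,
for dominant `ν' ≥ χ` the difference `ν' - ν` pairs non-negatively with every simple root whose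
coefficient is negative (there `⟨α, ν⟩ = 0`), and a positivity argument with the form
`B(μ, ξ) = ∑_{β ∈ Φ} ⟨β, μ⟩ ⟨β, ξ⟩` shows that such a functional has no negative coefficient.
-/

open Module

open Finset

namespace RootSystemData

variable {V : Type} [AddCommGroup V] [Module ℚ V] [FiniteDimensional ℚ V] (R : RootSystemData V)

lemma eq_of_sum_smul_simple_eq_s6 {f g : V → ℚ}
    (h : ∑ δ ∈ R.Δ, f δ • δ = ∑ δ ∈ R.Δ, g δ • δ) {α : V} (hα : α ∈ R.Δ) : f α = g α :=
  (linearIndepOn_finset_iffₛ (v := id)).mp R.Δ_indep f g h α hα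

lemma simple_mem_pos_s6 {α : V} (hα : α ∈ R.Δ) : α ∈ R.pos := by
  classical
  refine (R.mem_pos_iff α (R.Δ_sub hα)).mpr
    ⟨fun β => if β = α then 1 else 0, fun β => by dsimp only; split_ifs <;> norm_num, ?_⟩
  simp [ite_smul, sum_ite_eq', hα]

lemma coeff_nonneg_or_nonpos {γ : V} (hγ : γ ∈ R.Φ) {f : V → ℚ}
    (hf : γ = ∑ δ ∈ R.Δ, f δ • δ) : (∀ δ ∈ R.Δ, 0 ≤ f δ) ∨ (∀ δ ∈ R.Δ, f δ ≤ 0) := by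
  rcases R.pos_or_neg γ hγ with hpos | hneg
  · obtain ⟨c, hc, hγc⟩ := (R.mem_pos_iff γ hγ).mp hpos
    left
    intro δ hδ
    rw [R.eq_of_sum_smul_simple_eq_s6 (hf.symm.trans hγc) hδ]
    exact hc δ
  · obtain ⟨c, hc, hγc⟩ := (R.mem_pos_iff _ (R.pos_sub hneg)).mp hneg
    right
    intro δ hδ
    have : ∑ δ ∈ R.Δ, (-f δ) • δ = ∑ δ ∈ R.Δ, c δ • δ := by
      simp only [neg_smul, sum_neg_distrib, ← hf, hγc]
    linarith [R.eq_of_sum_smul_simple_eq_s6 this hδ, hc δ]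

lemma coroot_simple_nonpos {α β : V} (hα : α ∈ R.Δ) (hβ : β ∈ R.Δ) (hne : β ≠ α) :
    R.coroot α β ≤ 0 := by
  classical
  set f : V → ℚ := fun δ => (if δ = β then 1 else 0) - if δ = α then R.coroot α β else 0
  have hf : β - R.coroot α β • α = ∑ δ ∈ R.Δ, f δ • δ := by
    simp [f, sub_smul, ite_smul, sum_sub_distrib, sum_ite_eq', hα, hβ]
  rcases R.coeff_nonneg_or_nonpos (R.reflect_root α (R.Δ_sub hα) β (R.Δ_sub hβ)) hf with h | h
  · simpa [f, hne.symm] using h α hα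
  · exact absurd (h β hβ) (by simp [f, hne])

lemma span_simple_eq_top : Submodule.span ℚ (R.Δ : Set V) = ⊤ := by
  have hpos : ∀ γ ∈ R.pos, γ ∈ Submodule.span ℚ (R.Δ : Set V) := by
    intro γ hγ
    obtain ⟨c, -, rfl⟩ := (R.mem_pos_iff γ (R.pos_sub hγ)).mp hγ
    exact Submodule.sum_mem _ fun δ hδ => Submodule.smul_mem _ _ (Submodule.subset_span hδ)
  rw [eq_top_iff, ← R.span_Φ, Submodule.span_le]
  intro β hβ
  rcases R.pos_or_neg β hβ with h | h
  · exact hpos β h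
  · simpa using Submodule.neg_mem _ (hpos _ h)

lemma card_simple_eq_finrank : #R.Δ = finrank ℚ V := by
  rw [← finrank_span_finset_eq_card R.Δ_indep, R.span_simple_eq_top, finrank_top]

def corootScale (γ : V) : ℚ := (∑ β ∈ R.Φ, R.coroot γ β ^ 2) / 2

lemma corootScale_pos {γ : V} (hγ : γ ∈ R.Φ) : 0 < R.corootScale γ := by
  have := single_le_sum (f := fun β => R.coroot γ β ^ 2) (fun β _ => sq_nonneg _) hγ
  simp only [R.coroot_self γ hγ] at this
  unfold corootScale
  linarith

/-- The reflection `s_γ` permutes `Φ` and negates `⟨β, γ∨⟩`, so the sum `S` satisfies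
`S = -S + (∑ ⟨β, γ∨⟩²) γ`. -/
lemma sum_coroot_smul_root {γ : V} (hγ : γ ∈ R.Φ) :
    ∑ β ∈ R.Φ, R.coroot γ β • β = R.corootScale γ • γ := by
  set s := Module.reflection (R.coroot_self γ hγ)
  have hs : ∀ β, s β = β - R.coroot γ β • γ := fun β => Module.reflection_apply β _
  have hss : ∀ β, s (s β) = β := Module.involutive_reflection _
  have hγs : ∀ β, R.coroot γ (s β) = -R.coroot γ β := fun β => by
    rw [hs, map_sub, map_smul, R.coroot_self γ hγ, smul_eq_mul]; ring
  have hreindex : ∑ β ∈ R.Φ, R.coroot γ β • β = ∑ β ∈ R.Φ, R.coroot γ (s β) • s β :=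
    sum_nbij' s s (fun β hβ => by rw [hs]; exact R.reflect_root γ hγ β hβ)
      (fun β hβ => by rw [hs]; exact R.reflect_root γ hγ β hβ)
      (fun β _ => hss β) (fun β _ => hss β) (fun β _ => by rw [hss])
  have hterm : ∀ β, R.coroot γ (s β) • s β = -(R.coroot γ β • β) + R.coroot γ β ^ 2 • γ :=
    fun β => by rw [hγs, hs, neg_smul, smul_sub, smul_smul, sq]; abel
  rw [sum_congr rfl fun β _ => hterm β, sum_add_distrib, sum_neg_distrib, ← sum_smul]
    at hreindex
  unfold corootScale
  linear_combination (norm := module) (2 : ℚ)⁻¹ • hreindex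

def rootForm (μ ξ : Dual ℚ V) : ℚ := ∑ β ∈ R.Φ, μ β * ξ β

lemma rootForm_coroot_left {γ : V} (hγ : γ ∈ R.Φ) (ξ : Dual ℚ V) :
    R.rootForm (R.coroot γ) ξ = R.corootScale γ * ξ γ := by
  rw [← smul_eq_mul, ← map_smul, ← R.sum_coroot_smul_root hγ, map_sum]
  simp only [rootForm, map_smul, smul_eq_mul]

lemma rootForm_sum_smul_coroot_left {s : Finset V} (hs : s ⊆ R.Φ) (a : V → ℚ)
    (ξ : Dual ℚ V) :
    R.rootForm (∑ γ ∈ s, a γ • R.coroot γ) ξ = ∑ γ ∈ s, a γ * (R.corootScale γ * ξ γ) := by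
  calc R.rootForm (∑ γ ∈ s, a γ • R.coroot γ) ξ
      = ∑ γ ∈ s, a γ * R.rootForm (R.coroot γ) ξ := by
        simp only [rootForm, LinearMap.sum_apply, LinearMap.smul_apply, smul_eq_mul, sum_mul,
          mul_sum, mul_assoc]
        exact sum_comm
    _ = ∑ γ ∈ s, a γ * (R.corootScale γ * ξ γ) :=
        sum_congr rfl fun γ hγ => by rw [R.rootForm_coroot_left (hs hγ)]

lemma eq_zero_of_rootForm_self_nonpos {μ : Dual ℚ V} (h : R.rootForm μ μ ≤ 0) : μ = 0 := by
  have hsq : ∀ β ∈ R.Φ, μ β * μ β = 0 :=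
    (sum_eq_zero_iff_of_nonneg fun β _ => mul_self_nonneg (μ β)).mp
      (h.antisymm (sum_nonneg fun β _ => mul_self_nonneg (μ β)))
  exact LinearMap.ext_on R.span_Φ fun β hβ => mul_self_eq_zero.mp (hsq β hβ)

structure IsFundamentalWeights (ω : V → V) : Prop where
  coroot_apply_self : ∀ α ∈ R.Δ, R.coroot α (ω α) = 1
  coroot_apply_of_ne : ∀ α ∈ R.Δ, ∀ β ∈ R.Δ, α ≠ β → R.coroot β (ω α) = 0

namespace IsFundamentalWeights

variable {R} {ω : V → V}

lemma coroot_apply [DecidableEq V] (hω : R.IsFundamentalWeights ω) {α β : V} (hα : α ∈ R.Δ)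
    (hβ : β ∈ R.Δ) :
    R.coroot β (ω α) = if α = β then 1 else 0 := by
  split_ifs with h
  · exact h ▸ hω.coroot_apply_self α hα
  · exact hω.coroot_apply_of_ne α hα β hβ h

lemma sum_smul_coroot_apply [DecidableEq V] (hω : R.IsFundamentalWeights ω) {s : Finset V}
    (hs : s ⊆ R.Δ) (a : V → ℚ) {α : V} (hα : α ∈ R.Δ) :
    (∑ β ∈ s, a β • R.coroot β) (ω α) = if α ∈ s then a α else 0 := by
  rw [LinearMap.sum_apply, sum_congr rfl fun β hβ => by
    rw [LinearMap.smul_apply, hω.coroot_apply hα (hs hβ), smul_eq_mul, mul_ite, mul_one,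
      mul_zero]]
  exact sum_ite_eq s α a

lemma coroot_sum_smul (hω : R.IsFundamentalWeights ω) {β : V} (hβ : β ∈ R.Δ) (a : V → ℚ) :
    R.coroot β (∑ α ∈ R.Δ, a α • ω α) = a β := by
  classical
  rw [map_sum, sum_congr rfl fun α hα => by
    rw [map_smul, hω.coroot_apply hα hβ, smul_eq_mul, mul_ite, mul_one, mul_zero]]
  simp [hβ]

lemma linearIndepOn (hω : R.IsFundamentalWeights ω) : LinearIndepOn ℚ ω (R.Δ : Set V) :=
  linearIndepOn_finset_iff.mpr fun a ha β hβ => by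
    rw [← hω.coroot_sum_smul hβ a, ha, map_zero]

lemma span_eq_top (hω : R.IsFundamentalWeights ω) : Submodule.span ℚ (ω '' R.Δ) = ⊤ := by
  rw [Set.image_eq_range]
  exact hω.linearIndepOn.span_eq_top_of_card_eq_finrank' (by simp [R.card_simple_eq_finrank])

lemma eq_sum_smul_coroot (hω : R.IsFundamentalWeights ω) (μ : Dual ℚ V) :
    μ = ∑ α ∈ R.Δ, μ (ω α) • R.coroot α := by
  refine LinearMap.ext_on hω.span_eq_top ?_
  classical
  rintro - ⟨α, hα, rfl⟩
  rw [hω.sum_smul_coroot_apply subset_rfl _ hα, if_pos (mem_coe.mp hα)]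

lemma corootScale_smul_eq_sum (hω : R.IsFundamentalWeights ω) {β : V} (hβ : β ∈ R.Φ) :
    R.corootScale β • β = ∑ δ ∈ R.Δ, (R.coroot β (ω δ) * R.corootScale δ) • δ := by
  calc R.corootScale β • β
      = ∑ γ ∈ R.Φ, (∑ δ ∈ R.Δ, R.coroot β (ω δ) • R.coroot δ) γ • γ := by
        rw [← hω.eq_sum_smul_coroot, R.sum_coroot_smul_root hβ]
    _ = ∑ δ ∈ R.Δ, R.coroot β (ω δ) • ∑ γ ∈ R.Φ, R.coroot δ γ • γ := by
        simp only [LinearMap.sum_apply, LinearMap.smul_apply, sum_smul, smul_sum, smul_smul]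
        exact sum_comm
    _ = ∑ δ ∈ R.Δ, (R.coroot β (ω δ) * R.corootScale δ) • δ :=
        sum_congr rfl fun δ hδ => by rw [R.sum_coroot_smul_root (R.Δ_sub hδ), smul_smul]

/-- Comparing `c_β β = ∑ ⟨ω_δ, β∨⟩ c_δ δ` with the non-negative expansion of `β` in `Δ`. -/
lemma coroot_apply_nonneg_of_mem_pos (hω : R.IsFundamentalWeights ω) {β α : V} (hβ : β ∈ R.pos)
    (hα : α ∈ R.Δ) :
    0 ≤ R.coroot β (ω α) := by
  obtain ⟨e, he, hβe⟩ := (R.mem_pos_iff β (R.pos_sub hβ)).mp hβ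
  have hsum : ∑ δ ∈ R.Δ, (R.corootScale β * e δ) • δ =
      ∑ δ ∈ R.Δ, (R.coroot β (ω δ) * R.corootScale δ) • δ := by
    calc ∑ δ ∈ R.Δ, (R.corootScale β * e δ) • δ = R.corootScale β • β := by
          simp only [hβe, smul_sum, smul_smul]
      _ = _ := hω.corootScale_smul_eq_sum (R.pos_sub hβ)
  have hcoeff := R.eq_of_sum_smul_simple_eq_s6 hsum hα
  have hcα := R.corootScale_pos (R.Δ_sub hα)
  have hcβ := R.corootScale_pos (R.pos_sub hβ)
  nlinarith [he α]

lemma le_iff (hω : R.IsFundamentalWeights ω) {ν₁ ν₂ : Dual ℚ V} :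
    R.le ν₁ ν₂ ↔ ∀ α ∈ R.Δ, 0 ≤ (ν₂ - ν₁) (ω α) := by
  classical
  constructor
  · rintro ⟨c, hc, hsum⟩ α hα
    rw [hsum, LinearMap.sum_apply]
    exact sum_nonneg fun β hβ => mul_nonneg (hc β) (hω.coroot_apply_nonneg_of_mem_pos hβ hα)
  · intro h
    refine ⟨fun β => if β ∈ R.Δ then (ν₂ - ν₁) (ω β) else 0,
      fun β => by dsimp only; split_ifs with hβ; exacts [h β hβ, le_rfl], ?_⟩
    rw [← sum_subset (fun α hα => R.simple_mem_pos_s6 hα) fun β _ hβ => by simp [hβ]]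
    conv_lhs => rw [hω.eq_sum_smul_coroot (ν₂ - ν₁)]
    exact sum_congr rfl fun α hα => by simp only [if_pos hα]

/-- Write `μ = μ⁺ - μ⁻` with `μ⁻ = ∑_{α ∈ J} -⟨ω_α, μ⟩ α∨` over the set `J` of negative
coefficients. The hypothesis gives `B(μ⁻, μ) ≥ 0`, and the Cartan signs give `B(μ⁻, μ⁺) ≤ 0`,
so `B(μ⁻, μ⁻) ≤ 0` and `μ⁻ = 0`. -/
lemma apply_nonneg_of_apply_neg_imp (hω : R.IsFundamentalWeights ω) {μ : Dual ℚ V}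
    (h : ∀ α ∈ R.Δ, μ (ω α) < 0 → 0 ≤ μ α) : ∀ α ∈ R.Δ, 0 ≤ μ (ω α) := by
  classical
  by_contra! hex
  obtain ⟨α₀, hα₀, hμα₀⟩ := hex
  set J := R.Δ.filter fun α => μ (ω α) < 0
  have hJΔ : J ⊆ R.Δ := filter_subset _ _
  have hJΦ : J ⊆ R.Φ := hJΔ.trans R.Δ_sub
  set μneg := ∑ α ∈ J, (-μ (ω α)) • R.coroot α
  set μpos := ∑ α ∈ R.Δ \ J, μ (ω α) • R.coroot α
  have hμneg : μneg = μpos - μ := by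
    conv_rhs => rw [hω.eq_sum_smul_coroot μ, ← sum_sdiff hJΔ]
    simp only [μneg, neg_smul, sum_neg_distrib]
    abel
  have hpair : 0 ≤ R.rootForm μneg μ := by
    rw [R.rootForm_sum_smul_coroot_left hJΦ]
    refine sum_nonneg fun α hα => ?_
    obtain ⟨hαΔ, hμα⟩ := mem_filter.mp hα
    exact mul_nonneg (by linarith) (mul_nonneg (R.corootScale_pos (R.Δ_sub hαΔ)).le
      (h α hαΔ hμα))
  have hcross : R.rootForm μneg μpos ≤ 0 := by
    rw [R.rootForm_sum_smul_coroot_left hJΦ]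
    refine sum_nonpos fun α hα => ?_
    obtain ⟨hαΔ, hμα⟩ := mem_filter.mp hα
    have hμpos : μpos α ≤ 0 := by
      simp only [μpos, LinearMap.sum_apply, LinearMap.smul_apply, smul_eq_mul]
      refine sum_nonpos fun β hβ => ?_
      obtain ⟨hβΔ, hβJ⟩ := mem_sdiff.mp hβ
      have hμβ : 0 ≤ μ (ω β) := not_lt.mp fun hlt => hβJ (mem_filter.mpr ⟨hβΔ, hlt⟩)
      exact mul_nonpos_of_nonneg_of_nonpos hμβ
        (R.coroot_simple_nonpos hβΔ hαΔ fun hαβ => hβJ (hαβ ▸ hα))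
    exact mul_nonpos_of_nonneg_of_nonpos (by linarith)
      (mul_nonpos_of_nonneg_of_nonpos (R.corootScale_pos (R.Δ_sub hαΔ)).le hμpos)
  have hself : R.rootForm μneg μneg ≤ 0 := by
    have : R.rootForm μneg μneg = R.rootForm μneg μpos - R.rootForm μneg μ := by
      simp only [rootForm, ← sum_sub_distrib, ← mul_sub, ← LinearMap.sub_apply, ← hμneg]
    linarith
  have hα₀J : α₀ ∈ J := mem_filter.mpr ⟨hα₀, hμα₀⟩
  have hval : μneg (ω α₀) = -μ (ω α₀) :=
    (hω.sum_smul_coroot_apply hJΔ _ hα₀).trans (if_pos hα₀J)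
  rw [R.eq_zero_of_rootForm_self_nonpos hself, LinearMap.zero_apply] at hval
  linarith

lemma le_sub_smul_coroot (hω : R.IsFundamentalWeights ω) {χ ν : Dual ℚ V} (h : R.le χ ν)
    {α : V} (hα : α ∈ R.Δ) {t : ℚ} (ht : t ≤ (ν - χ) (ω α)) : R.le χ (ν - t • R.coroot α) := by
  classical
  rw [hω.le_iff] at h ⊢
  intro δ hδ
  have hδα : (ν - t • R.coroot α - χ) (ω δ) = (ν - χ) (ω δ) - if δ = α then t else 0 := by
    simp only [LinearMap.sub_apply, LinearMap.smul_apply, hω.coroot_apply hδ hα, smul_eq_mul,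
      mul_ite, mul_one, mul_zero]
    ring
  rw [hδα]
  split_ifs with h'
  · rw [h']; linarith
  · linarith [h δ hδ]

lemma not_le_sub_smul_coroot (hω : R.IsFundamentalWeights ω) (ν : Dual ℚ V) {α : V}
    (hα : α ∈ R.Δ) {t : ℚ} (ht : 0 < t) :
    ¬R.le ν (ν - t • R.coroot α) := by
  rw [hω.le_iff]
  intro h
  have := h α hα
  simp only [sub_sub_cancel_left, LinearMap.neg_apply, LinearMap.smul_apply,
    hω.coroot_apply_self α hα, smul_eq_mul, mul_one] at this
  linarith

end IsFundamentalWeights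

variable {R} in
lemma IsDominant.sub_smul_coroot {ν : Dual ℚ V} (hν : R.IsDominant ν) {α : V} (hα : α ∈ R.Δ)
    {t : ℚ} (ht : 0 ≤ t) (htν : 2 * t ≤ ν α) : R.IsDominant (ν - t • R.coroot α) := by
  intro β hβ
  simp only [LinearMap.sub_apply, LinearMap.smul_apply, smul_eq_mul]
  by_cases hβα : β = α
  · rw [hβα, R.coroot_self α (R.Δ_sub hα)]
    linarith
  · nlinarith [hν β hβ, R.coroot_simple_nonpos hα hβ hβα]

end RootSystemData

/-- Lemma 6.2(1) (combinatorial content): let `χ ∈ V∨` and let `ν ∈ V∨` be dominant with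
`χ ≤ ν`. Then `ν` is the least element of `{ν' ∈ V∨ : ν' dominant, χ ≤ ν'}` if and only
if `⟨ω_α, ν − χ⟩ = 0` for every simple root `α` with `⟨α, ν⟩ > 0`, where `ω_α ∈ V` are
the fundamental weights, dual to the simple coroots. -/
theorem least_dominant_above_iff_fundamental_weights {V : Type} [AddCommGroup V]
    [Module ℚ V] [FiniteDimensional ℚ V] (R : RootSystemData V)
    (ω : V → V) (hω1 : ∀ α ∈ R.Δ, R.coroot α (ω α) = 1)
    (hω0 : ∀ α ∈ R.Δ, ∀ β ∈ R.Δ, α ≠ β → R.coroot β (ω α) = 0)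
    (χ ν : Module.Dual ℚ V) (hν : R.IsDominant ν) (hχν : R.le χ ν) :
    (∀ ν' : Module.Dual ℚ V, R.IsDominant ν' → R.le χ ν' → R.le ν ν') ↔
      (∀ α ∈ R.Δ, 0 < ν α → (ν - χ) (ω α) = 0) := by
  have hω : R.IsFundamentalWeights ω := ⟨hω1, hω0⟩
  constructor
  · intro hmin α hα hνα
    by_contra hne
    have hpos : 0 < (ν - χ) (ω α) := (hω.le_iff.mp hχν α hα).lt_of_ne' hne
    set t := min ((ν - χ) (ω α)) (ν α / 2)
    have ht : 0 < t := lt_min hpos (half_pos hνα)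
    have hdom := hν.sub_smul_coroot hα ht.le (by linarith [min_le_right ((ν - χ) (ω α)) (ν α / 2)])
    exact hω.not_le_sub_smul_coroot ν hα ht
      (hmin _ hdom (hω.le_sub_smul_coroot hχν hα (min_le_left _ _)))
  · intro hcond ν' hν' hχν'
    refine hω.le_iff.mpr (hω.apply_nonneg_of_apply_neg_imp fun α hα hneg => ?_)
    have hνα : ν α = 0 := by
      by_contra hne
      have h0 := hcond α hα ((hν α hα).lt_of_ne' hne)
      have h1 := hω.le_iff.mp hχν' α hα
      simp only [LinearMap.sub_apply] at h0 h1 hneg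
      linarith
    simpa [hνα] using hν' α hα
end

section
/- Let u ∈ U(L) be an upper triangular unipotent matrix, let λ ∈ ℤⁿ, and let μ ∈ ℤⁿ be dominant. If u·D(λ) ∈ K·D(μ)·K, then λ⁺ ≤ μ, where λ⁺ denotes the decreasing rearrangement of λ; in particular λ₁+⋯+λₙ = μ₁+⋯+μₙ. (GLₙ case of the claim in Remark 2.? of the paper that non-emptiness of S_λ ∩ Gr_{G,≤μ} implies λ_dom ≤ (−μ)_dom, i.e. the classical comparison of the Iwasawa and Cartan decompositions.) -/
/-!
The principal minor of `u·D(λ)` on an index set `T` is `t^(∑_{i∈T} λᵢ)`, since the principal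
submatrices of `u` are again unitriangular. On the other side, Cauchy–Binet writes every `j × j`
minor of `k₁·D(μ)·k₂` as a sum of products of integral elements with `t^(∑_{i∈I} μᵢ)`, `|I| = j`,
so its valuation is at least the sum of the `j` smallest entries of `μ`. Taking `T` to index the
smallest entries of `λ`, together with `∑ λᵢ = ∑ μᵢ` (elements of `K` have unit determinants in
`k⟦t⟧`), gives `λ⁺ ≤ μ`.
-/
noncomputable section

/-- The subring `R = k⟦t⟧` of the field of Laurent series `L = k((t))`, i.e. the image
of the power series ring. -/
def Rsub (k : Type) [Field k] : Subring (LaurentSeries k) :=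
  (HahnSeries.ofPowerSeries ℤ k).range

/-- The element `t ∈ k((t))`. -/
def tL (k : Type) [Field k] : LaurentSeries k := HahnSeries.single (1 : ℤ) 1

/-- The diagonal matrix `D(λ) = diag(t^{λ₁}, …, t^{λₙ}) ∈ GLₙ(k((t)))`. -/
def Dmat (k : Type) [Field k] (n : ℕ) (lam : Fin n → ℤ) :
    Matrix (Fin n) (Fin n) (LaurentSeries k) :=
  Matrix.diagonal fun i => (tL k) ^ (lam i)

/-- `K = GLₙ(k⟦t⟧) ⊆ GLₙ(k((t)))`: matrices with entries in `k⟦t⟧` admitting a (two-sided)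
inverse with entries in `k⟦t⟧`. -/
def Kset (k : Type) [Field k] (n : ℕ) : Set (Matrix (Fin n) (Fin n) (LaurentSeries k)) :=
  {A | ∃ B : Matrix (Fin n) (Fin n) (LaurentSeries k),
    (∀ i j, A i j ∈ Rsub k) ∧ (∀ i j, B i j ∈ Rsub k) ∧ A * B = 1 ∧ B * A = 1}

/-- `U(L)`: upper triangular matrices over `k((t))` with all diagonal entries equal to 1. -/
def Uset (k : Type) [Field k] (n : ℕ) : Set (Matrix (Fin n) (Fin n) (LaurentSeries k)) :=
  {u | (∀ i, u i i = 1) ∧ ∀ i j : Fin n, j < i → u i j = 0}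

/-- A tuple `μ ∈ ℤⁿ` is dominant if `μ₁ ≥ μ₂ ≥ ⋯ ≥ μₙ`. -/
def DominantT {n : ℕ} (μ : Fin n → ℤ) : Prop := ∀ i j : Fin n, i ≤ j → μ j ≤ μ i

/-- The dominance order on `ℤⁿ`: `λ ≤ μ` iff all proper partial sums of `λ` are at most
those of `μ` and the total sums agree. -/
def leT {n : ℕ} (lam μ : Fin n → ℤ) : Prop :=
  (∀ j : Fin n, ∑ i ∈ Finset.univ.filter (· ≤ j), lam i ≤
    ∑ i ∈ Finset.univ.filter (· ≤ j), μ i) ∧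
  ∑ i, lam i = ∑ i, μ i

open Finset HahnSeries

theorem Finset.prod_zpow_eq_zpow_sum {ι G₀ : Type*} [CommGroupWithZero G₀] {a : G₀} (ha : a ≠ 0)
    (s : Finset ι) (f : ι → ℤ) : ∏ i ∈ s, a ^ f i = a ^ ∑ i ∈ s, f i := by
  classical
  induction s using Finset.induction_on with
  | empty => simp
  | insert i s hi ih => rw [prod_insert hi, sum_insert hi, ih, zpow_add₀ ha]

theorem Finset.sum_le_sum_of_card_eq_of_forall_le {ι M : Type*} [AddCommMonoid M] [LinearOrder M]
    [IsOrderedAddMonoid M] {s t : Finset ι} {f : ι → M} (hcard : #s = #t)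
    (h : ∀ a ∈ s, ∀ b ∈ t, f a ≤ f b) : ∑ i ∈ s, f i ≤ ∑ i ∈ t, f i := by
  rcases s.eq_empty_or_nonempty with rfl | hs
  · rw [card_empty, eq_comm, card_eq_zero] at hcard
    simp [hcard]
  obtain ⟨a, ha, hmax⟩ := s.exists_max_image f hs
  calc ∑ i ∈ s, f i ≤ #s • f a := sum_le_card_nsmul _ _ _ hmax
    _ = #t • f a := by rw [hcard]
    _ ≤ ∑ i ∈ t, f i := card_nsmul_le_sum _ _ _ fun b hb => h a ha b hb

theorem Finset.sum_le_sum_of_isUpperSet {ι M : Type*} [LinearOrder ι] [AddCommMonoid M]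
    [LinearOrder M] [IsOrderedCancelAddMonoid M] {s t : Finset ι} {f : ι → M} (hf : Antitone f)
    (hs : IsUpperSet (s : Set ι)) (hcard : #s = #t) : ∑ i ∈ s, f i ≤ ∑ i ∈ t, f i := by
  classical
  rw [← sum_sdiff_le_sum_sdiff]
  refine sum_le_sum_of_card_eq_of_forall_le (card_sdiff_comm hcard) fun a ha b hb => hf ?_
  rw [mem_sdiff] at ha hb
  exact le_of_not_ge fun hab => hb.2 (hs hab ha.1)

theorem Matrix.det_mul_eq_sum_prod_mul_det_submatrix {m n R : Type*} [Fintype m] [DecidableEq m]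
    [Fintype n] [CommRing R] (A : Matrix m n R) (B : Matrix n m R) :
    (A * B).det = ∑ f : m → n, (∏ i, A i (f i)) * (B.submatrix f id).det := by
  have hrows : A * B = Matrix.of fun i => ∑ s, A i s • B s := by
    ext i j; simp [Matrix.mul_apply]
  have := (Matrix.detRowAlternating (n := m) (R := R)).toMultilinearMap.map_sum
    (fun i s => A i s • B s)
  rw [hrows]
  refine this.trans (Fintype.sum_congr _ _ fun f => ?_)
  exact (Matrix.detRowAlternating (n := m) (R := R)).toMultilinearMap.map_smul_univ _ _

section LaurentSeries

variable {k : Type} [Field k]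

theorem addVal_nonneg_of_mem_Rsub {x : LaurentSeries k} (hx : x ∈ Rsub k) :
    0 ≤ addVal ℤ k x := by
  obtain ⟨φ, rfl⟩ := hx
  rw [addVal_apply, le_orderTop_iff_forall]
  intro j hj
  rw [PowerSeries.coeff_coe, if_pos (by exact_mod_cast hj)]

theorem tL_ne_zero : tL k ≠ 0 :=
  single_ne_zero one_ne_zero

theorem addVal_tL_zpow (m : ℤ) : addVal ℤ k (tL k ^ m) = m := by
  rw [tL, ← RatFunc.single_zpow, addVal_apply, orderTop_single one_ne_zero]

theorem det_mem_Rsub {ι : Type*} [Fintype ι] [DecidableEq ι] {A : Matrix ι ι (LaurentSeries k)}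
    (hA : ∀ i j, A i j ∈ Rsub k) : A.det ∈ Rsub k := by
  rw [Matrix.det_apply]
  exact sum_mem fun σ _ => Subring.zsmul_mem _ (prod_mem fun i _ => hA _ _) _

theorem addVal_det_of_mem_Kset {n : ℕ} {A : Matrix (Fin n) (Fin n) (LaurentSeries k)}
    (hA : A ∈ Kset k n) : addVal ℤ k A.det = 0 := by
  obtain ⟨B, hAR, hBR, hAB, -⟩ := hA
  have hsum : addVal ℤ k A.det + addVal ℤ k B.det = 0 := by
    rw [← AddValuation.map_mul, ← Matrix.det_mul, hAB, Matrix.det_one, AddValuation.map_one]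
  exact ((add_eq_zero_iff_of_nonneg (addVal_nonneg_of_mem_Rsub (det_mem_Rsub hAR))
    (addVal_nonneg_of_mem_Rsub (det_mem_Rsub hBR))).mp hsum).1

theorem det_submatrix_mul_Dmat_of_mem_Uset {n m : ℕ} {u : Matrix (Fin n) (Fin n) (LaurentSeries k)}
    (hu : u ∈ Uset k n) (lam : Fin n → ℤ) {e : Fin m → Fin n} (he : StrictMono e) :
    ((u * Dmat k n lam).submatrix e e).det = tL k ^ ∑ i, lam (e i) := by
  have hsplit : (u * Dmat k n lam).submatrix e e
      = u.submatrix e e * Matrix.diagonal fun i => tL k ^ lam (e i) := by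
    ext; simp [Dmat, Matrix.mul_diagonal]
  have htri : (u.submatrix e e).IsUpperTriangular := fun i j hij => hu.2 _ _ (he hij)
  have hunip : (u.submatrix e e).det = 1 := by
    rw [Matrix.det_of_isUpperTriangular htri]
    simp [hu.1]
  rw [hsplit, Matrix.det_mul, hunip, one_mul, Matrix.det_diagonal,
    prod_zpow_eq_zpow_sum tL_ne_zero]

theorem le_addVal_det_submatrix_Dmat_mul {n m : ℕ} (μ : Fin n → ℤ)
    {B : Matrix (Fin n) (Fin n) (LaurentSeries k)} (hB : ∀ i j, B i j ∈ Rsub k)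
    (r c : Fin m → Fin n) {b : ℤ} (hb : ∀ T : Finset (Fin n), #T = m → b ≤ ∑ i ∈ T, μ i) :
    (b : WithTop ℤ) ≤ addVal ℤ k ((Dmat k n μ * B).submatrix r c).det := by
  have hrows : (Dmat k n μ * B).submatrix r c
      = Matrix.of fun p q => tL k ^ μ (r p) * B.submatrix r c p q := by
    ext; simp [Dmat, Matrix.diagonal_mul]
  rw [hrows, Matrix.det_mul_column, AddValuation.map_mul, prod_zpow_eq_zpow_sum tL_ne_zero,
    addVal_tL_zpow]
  by_cases hr : Function.Injective r
  · calc (b : WithTop ℤ) ≤ ((∑ p, μ (r p) : ℤ) : WithTop ℤ) + 0 := by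
          rw [add_zero, WithTop.coe_le_coe]
          exact (hb _ (by simp)).trans_eq (sum_map univ ⟨r, hr⟩ μ)
      _ ≤ _ := add_le_add le_rfl (addVal_nonneg_of_mem_Rsub (det_mem_Rsub fun _ _ => hB _ _))
  · obtain ⟨p, q, hpq, hne⟩ := Function.not_injective_iff.mp hr
    rw [Matrix.det_zero_of_row_eq hne (by ext; simp [hpq]), AddValuation.map_zero, add_top]
    exact le_top

theorem le_addVal_det_submatrix_mul_Dmat_mul {n m : ℕ} (μ : Fin n → ℤ)
    {A B : Matrix (Fin n) (Fin n) (LaurentSeries k)} (hA : ∀ i j, A i j ∈ Rsub k)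
    (hB : ∀ i j, B i j ∈ Rsub k) (r c : Fin m → Fin n) {b : ℤ}
    (hb : ∀ T : Finset (Fin n), #T = m → b ≤ ∑ i ∈ T, μ i) :
    (b : WithTop ℤ) ≤ addVal ℤ k ((A * Dmat k n μ * B).submatrix r c).det := by
  rw [mul_assoc, Matrix.submatrix_mul _ _ r id c Function.bijective_id,
    Matrix.det_mul_eq_sum_prod_mul_det_submatrix]
  refine AddValuation.map_le_sum _ fun f _ => ?_
  rw [AddValuation.map_mul, Matrix.submatrix_submatrix, ← zero_add (b : WithTop ℤ)]
  exact add_le_add (addVal_nonneg_of_mem_Rsub (prod_mem fun p _ => hA _ _))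
    (le_addVal_det_submatrix_Dmat_mul μ hB _ _ hb)

theorem sum_le_sum_of_mul_Dmat_eq {n : ℕ} {u : Matrix (Fin n) (Fin n) (LaurentSeries k)}
    (hu : u ∈ Uset k n) {lam μ : Fin n → ℤ} (hμ : DominantT μ)
    {A B : Matrix (Fin n) (Fin n) (LaurentSeries k)} (hA : ∀ i j, A i j ∈ Rsub k)
    (hB : ∀ i j, B i j ∈ Rsub k) (heq : u * Dmat k n lam = A * Dmat k n μ * B)
    {S T : Finset (Fin n)} (hS : IsUpperSet (S : Set (Fin n))) (hcard : #S = #T) :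
    ∑ i ∈ S, μ i ≤ ∑ i ∈ T, lam i := by
  set e := T.orderEmbOfFin rfl
  have hT := sum_map univ e.toEmbedding lam
  rw [T.map_orderEmbOfFin_univ rfl] at hT
  have hminor := le_addVal_det_submatrix_mul_Dmat_mul μ hA hB e e (b := ∑ i ∈ S, μ i)
    fun T' hT' => sum_le_sum_of_isUpperSet hμ hS (hcard.trans hT'.symm)
  rw [← heq, det_submatrix_mul_Dmat_of_mem_Uset hu lam e.strictMono, addVal_tL_zpow,
    WithTop.coe_le_coe] at hminor
  exact hminor.trans_eq hT.symm

theorem sum_eq_sum_of_mul_Dmat_eq {n : ℕ} {u : Matrix (Fin n) (Fin n) (LaurentSeries k)}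
    (hu : u ∈ Uset k n) {lam μ : Fin n → ℤ} {A B : Matrix (Fin n) (Fin n) (LaurentSeries k)}
    (hA : A ∈ Kset k n) (hB : B ∈ Kset k n) (heq : u * Dmat k n lam = A * Dmat k n μ * B) :
    ∑ i, lam i = ∑ i, μ i := by
  have hL := det_submatrix_mul_Dmat_of_mem_Uset hu lam strictMono_id
  have hD : (Dmat k n μ).det = tL k ^ ∑ i, μ i := by
    rw [Dmat, Matrix.det_diagonal, prod_zpow_eq_zpow_sum tL_ne_zero]
  have hval := congrArg (fun M => addVal ℤ k M.det) heq
  simp only [Matrix.submatrix_id_id, id] at hL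
  simp only [hL, Matrix.det_mul, AddValuation.map_mul, addVal_det_of_mem_Kset hA,
    addVal_det_of_mem_Kset hB, hD, addVal_tL_zpow, zero_add, add_zero] at hval
  exact_mod_cast hval

end LaurentSeries

theorem leT_of_sum_Ioi_le {n : ℕ} {lam μ : Fin n → ℤ} (htot : ∑ i, lam i = ∑ i, μ i)
    (h : ∀ j, ∑ i ∈ Ioi j, μ i ≤ ∑ i ∈ Ioi j, lam i) : leT lam μ := by
  refine ⟨fun j => ?_, htot⟩
  have hl := sum_filter_add_sum_filter_not univ (· ≤ j) lam
  have hm := sum_filter_add_sum_filter_not univ (· ≤ j) μ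
  simp only [not_le, filter_lt_eq_Ioi] at hl hm
  linarith [h j]

/-- Comparison of the Iwasawa and Cartan decompositions for `GLₙ(k((t)))`: if `u` is
upper triangular unipotent, `μ` is dominant, and `u·D(λ) ∈ K·D(μ)·K`, then `λ⁺ ≤ μ`,
where `λ⁺` is the decreasing rearrangement of `λ` (in particular the entries of `λ` and
`μ` have the same sum). -/
theorem iwasawa_cartan_comparison {k : Type} [Field k] (n : ℕ)
    (u : Matrix (Fin n) (Fin n) (LaurentSeries k)) (hu : u ∈ Uset k n)
    (lam μ : Fin n → ℤ) (hμ : DominantT μ)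
    (h : ∃ k₁ ∈ Kset k n, ∃ k₂ ∈ Kset k n, u * Dmat k n lam = k₁ * Dmat k n μ * k₂) :
    ∃ σ : Equiv.Perm (Fin n), DominantT (lam ∘ σ) ∧ leT (lam ∘ σ) μ := by
  obtain ⟨k₁, hk₁, k₂, hk₂, heq⟩ := h
  let σ : Equiv.Perm (Fin n) := Fin.revPerm.trans (Tuple.sort lam)
  refine ⟨σ, fun i j hij => Tuple.monotone_sort lam (Fin.rev_le_rev.mpr hij),
    leT_of_sum_Ioi_le ?_ fun j => ?_⟩
  · rw [Function.comp_def, Equiv.sum_comp σ lam]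
    exact sum_eq_sum_of_mul_Dmat_eq hu hk₁ hk₂ heq
  · obtain ⟨-, hk₁R, -⟩ := hk₁
    obtain ⟨-, hk₂R, -⟩ := hk₂
    exact (sum_le_sum_of_mul_Dmat_eq hu hμ hk₁R hk₂R heq (by simpa using isUpperSet_Ioi j)
      (card_map _).symm).trans_eq (sum_map (Ioi j) σ.toEmbedding lam)

end
end
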